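/- (Corollary: Fuchsian case.) Assume each a_{j,r,n} belongs to ℂ{z} and that Λ_m ⊆ ℕ₀×{0}, and suppose the non-resonance condition W(n,0) ≠ 0 holds for every n ∈ ℕ₀, where W(λ,z) := Σ_{(j,0)∈Λ_m} a_{j,0,j−m}(z)·λ(λ−1)⋯(λ−(j−m)+1) so that W(n,0) = Σ_{(j,0)∈Λ_m} a_{j,0,j−m}(0)·n(n−1)⋯(n−(j−m)+1) (using the constant terms of the series a_{j,0,j−m}; the falling factorial equals 1 when j = m). Then the Fuchsian operator P(∂_t,∂_z)∂_t^{−m} is a bijective ℂ-linear map of ℂ[[t,z]] onto itself whose restriction to 𝒪[[t]] is a bijection of 𝒪[[t]] onto itself. -/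

import Mathlib

/-!
Read coefficientwise in `t`, `P(∂_t,∂_z)∂_t^{-m}` is a lower-triangular system: the `t^n`
coefficient of the image of `u` is `Σ_{k ≤ n} T_{n,k} u_k`, because `ord_t a_{jr} ≥ j - m` kills
every contribution with `k > n`. In the Fuchsian case the diagonal entry `T_{n,n}` is
multiplication by `b_{n,0} ∈ ℂ{z}`, whose constant term is `W(n,0) ≠ 0`; hence it is a unit of
`ℂ[[z]]` with inverse in `ℂ{z}`, and the system has a unique solution, computed recursively.
Each `T_{n,k}` is built from multiplications by the `a_{j,r,i}` and powers of `∂_z`, all of which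
preserve `ℂ{z}`, so the recursion stays inside `𝒪[[t]]` when the right-hand side does.
-/

open PowerSeries

set_option synthInstance.maxHeartbeats 1000000
set_option maxHeartbeats 1000000

/-- Formal differentiation `∂_z` on `ℂ[[z]]` as a `ℂ`-linear map. -/
noncomputable def dz : PowerSeries ℂ →ₗ[ℂ] PowerSeries ℂ where
  toFun u := PowerSeries.mk fun n => ((n : ℂ) + 1) * PowerSeries.coeff (R := ℂ) (n + 1) u
  map_add' u v := by
    ext n
    simp [mul_add]
  map_smul' c u := by
    ext n
    simp
    ring

/-- The order of vanishing at `0` of a formal power series in `z`. -/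
noncomputable def ordz (g : PowerSeries ℂ) : ℕ := sInf {k : ℕ | PowerSeries.coeff (R := ℂ) k g ≠ 0}

/-- `ℂ[[t,z]]`, identified with formal power series in `t` with coefficients in `ℂ[[z]]`. -/
abbrev PS2 : Type := PowerSeries (PowerSeries ℂ)

lemma coeff2_smul (c : ℂ) (u : PS2) (n : ℕ) :
    PowerSeries.coeff (R := PowerSeries ℂ) n (c • u) =
      c • PowerSeries.coeff (R := PowerSeries ℂ) n u := rfl

/-- The order in `t` of an element of `ℂ[[t,z]]`. -/
noncomputable def ordT (g : PS2) : ℕ :=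
  sInf {n : ℕ | PowerSeries.coeff (R := PowerSeries ℂ) n g ≠ 0}

/-- Formal differentiation `∂_t` on `ℂ[[t,z]]`. -/
noncomputable def dt : PS2 →ₗ[ℂ] PS2 where
  toFun u := PowerSeries.mk fun n =>
    ((n : ℂ) + 1) • PowerSeries.coeff (R := PowerSeries ℂ) (n + 1) u
  map_add' u v := by
    ext n
    simp [smul_add]
  map_smul' c u := by
    ext n
    simp [coeff2_smul, smul_smul, mul_comm]

/-- Formal differentiation `∂_z` on `ℂ[[t,z]]`, acting on each coefficient `u_n ∈ ℂ[[z]]`. -/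
noncomputable def dzc : PS2 →ₗ[ℂ] PS2 where
  toFun u := PowerSeries.mk fun n => dz (PowerSeries.coeff (R := PowerSeries ℂ) n u)
  map_add' u v := by
    ext n
    simp
  map_smul' c u := by
    ext n
    simp [coeff2_smul]

/-- The integration operator `∂_t^{−m}` on `ℂ[[t,z]]`, sending `Σ u_n t^n` to
`Σ (n!/(n+m)!)·u_n t^{n+m}`. -/
noncomputable def dtInv (m : ℕ) : PS2 →ₗ[ℂ] PS2 where
  toFun u := PowerSeries.mk fun n =>
    if m ≤ n then
      ((((n - m).factorial : ℂ)) / (n.factorial : ℂ)) • PowerSeries.coeff (R := PowerSeries ℂ) (n - m) u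
    else 0
  map_add' u v := by
    ext n
    simp only [PowerSeries.coeff_mk, map_add]
    split <;> simp [smul_add]
  map_smul' c u := by
    ext n
    simp only [PowerSeries.coeff_mk, coeff2_smul, RingHom.id_apply]
    split <;> simp [coeff2_smul, smul_smul, mul_comm]

/-- The operator `P(∂_t,∂_z)∂_t^{−m}` on `ℂ[[t,z]]`, where
`P(∂_t,∂_z) u = Σ_{(j,r)∈Λ} a_{jr}·∂_t^j ∂_z^r u`. -/
noncomputable def POp (Λ : Finset (ℕ × ℕ)) (a : ℕ × ℕ → PS2) (m : ℕ) : PS2 →ₗ[ℂ] PS2 :=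
  (∑ p ∈ Λ, (LinearMap.mulLeft ℂ (a p)).comp ((dt ^ p.1).comp (dzc ^ p.2))).comp (dtInv m)

/-- The coefficient `b_{n,r} = Σ_{j : (j,r)∈Λ_m} n(n−1)⋯(n−(j−m)+1)·a_{j,r,j−m} ∈ ℂ[[z]]`,
where `M` is the integer `m = max_{(j,r)∈Λ}(j − ord_t(a_{jr}))`. -/
noncomputable def bcoef (Λ : Finset (ℕ × ℕ)) (a : ℕ × ℕ → PS2) (M : ℤ) (n r : ℕ) :
    PowerSeries ℂ :=
  ∑ p ∈ Λ.filter (fun p => p.2 = r ∧ (p.1 : ℤ) - (ordT (a p) : ℤ) = M),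
    (n.descFactorial (p.1 - M.toNat) : ℂ) •
      PowerSeries.coeff (R := PowerSeries ℂ) (p.1 - M.toNat) (a p)

/-- The operator `P̃_m(n,∂_z) v = Σ_r b_{n,r}·∂_z^r v` on `ℂ[[z]]`. -/
noncomputable def Ptil (Λ : Finset (ℕ × ℕ)) (a : ℕ × ℕ → PS2) (M : ℤ) (n : ℕ) :
    PowerSeries ℂ →ₗ[ℂ] PowerSeries ℂ :=
  ∑ r ∈ Λ.image Prod.snd, (LinearMap.mulLeft ℂ (bcoef Λ a M n r)).comp (dz ^ r)

/-- The quantity `W(n,k) = W_{m,0}(n,k,0)`: the sum over `(j,r) ∈ Λ_m` with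
`ord_z(a_{j,r,j−m}) = r` of `c_{j,r}·n(n−1)⋯(n−(j−m)+1)·k(k−1)⋯(k−r+1)`, where `c_{j,r}` is
the coefficient of `z^r` in `a_{j,r,j−m}`. -/
noncomputable def Wnk (Λ : Finset (ℕ × ℕ)) (a : ℕ × ℕ → PS2) (M : ℤ) (n k : ℕ) : ℂ :=
  ∑ p ∈ Λ.filter (fun p => (p.1 : ℤ) - (ordT (a p) : ℤ) = M ∧
      ordz (PowerSeries.coeff (R := PowerSeries ℂ) (p.1 - M.toNat) (a p)) = p.2),
    PowerSeries.coeff (R := ℂ) p.2 (PowerSeries.coeff (R := PowerSeries ℂ) (p.1 - M.toNat) (a p))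
      * (n.descFactorial (p.1 - M.toNat) : ℂ) * (k.descFactorial p.2 : ℂ)

/-- The set `ℂ[[z]]_s` of Gevrey series of order `s`: series `Σ v_k z^k` with
`|v_k| ≤ C·A^k·Γ(1+sk)` for some `C, A > 0`. -/
noncomputable def GevreyS (s : ℝ) : Set (PowerSeries ℂ) :=
  {u | ∃ C A : ℝ, 0 < C ∧ 0 < A ∧
    ∀ n : ℕ, ‖PowerSeries.coeff (R := ℂ) n u‖ ≤ C * A ^ n * Real.Gamma (1 + s * n)}

/-- `ℂ{z}`: power series with positive radius of convergence, i.e. with geometrically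
bounded coefficients. -/
noncomputable def Cz : Set (PowerSeries ℂ) :=
  {u | ∃ C A : ℝ, 0 < C ∧ 0 < A ∧ ∀ n : ℕ, ‖PowerSeries.coeff (R := ℂ) n u‖ ≤ C * A ^ n}

/-- `G_s[[t]]`: elements of `ℂ[[t,z]]` all of whose `t`-coefficients lie in `ℂ[[z]]_s`. -/
noncomputable def Gst (s : ℝ) : Set PS2 :=
  {u | ∀ n : ℕ, PowerSeries.coeff (R := PowerSeries ℂ) n u ∈ GevreyS s}

/-- `𝒪[[t]]`: elements of `ℂ[[t,z]]` all of whose `t`-coefficients lie in `ℂ{z}`. -/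
noncomputable def Ot : Set PS2 :=
  {u | ∀ n : ℕ, PowerSeries.coeff (R := PowerSeries ℂ) n u ∈ Cz}

/-- The characteristic polynomial for the Fuchsian case, evaluated at `n` and `z = 0`:
`W(n,0) = Σ_{(j,0)∈Λ_m} a_{j,0,j−m}(0)·n(n−1)⋯(n−(j−m)+1)`. -/
noncomputable def WFuchs (Λ : Finset (ℕ × ℕ)) (a : ℕ × ℕ → PS2) (M : ℤ) (n : ℕ) : ℂ :=
  ∑ p ∈ Λ.filter (fun p => (p.1 : ℤ) - (ordT (a p) : ℤ) = M),
    PowerSeries.coeff (R := ℂ) 0 (PowerSeries.coeff (R := PowerSeries ℂ) (p.1 - M.toNat) (a p))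
      * (n.descFactorial (p.1 - M.toNat) : ℂ)

open Finset
open scoped Nat

section Triangular

variable {S : Type*} [Ring S]

structure IsLowerTriangular (L : PowerSeries S → PowerSeries S) (T : ℕ → ℕ → S → S)
    (b : ℕ → Sˣ) : Prop where
  coeff_apply : ∀ u n, coeff n (L u) = ∑ k ∈ range (n + 1), T n k (coeff k u)
  diag : ∀ n v, T n n v = b n * v

noncomputable def triangularSolution (T : ℕ → ℕ → S → S) (b : ℕ → Sˣ) (g : PowerSeries S) :
    ℕ → S
  | n => ↑(b n)⁻¹ * (coeff n g - ∑ k ∈ (range n).attach, T n k (triangularSolution T b g k))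
termination_by n => n
decreasing_by exact mem_range.mp k.2

lemma triangularSolution_def (T : ℕ → ℕ → S → S) (b : ℕ → Sˣ) (g : PowerSeries S) (n : ℕ) :
    triangularSolution T b g n =
      ↑(b n)⁻¹ * (coeff n g - ∑ k ∈ range n, T n k (triangularSolution T b g k)) := by
  rw [triangularSolution, sum_attach (range n) fun k => T n k (triangularSolution T b g k)]

namespace IsLowerTriangular

variable {L : PowerSeries S → PowerSeries S} {T : ℕ → ℕ → S → S} {b : ℕ → Sˣ}

lemma coeff_apply_eq (h : IsLowerTriangular L T b) (u : PowerSeries S) (n : ℕ) :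
    coeff n (L u) = b n * coeff n u + ∑ k ∈ range n, T n k (coeff k u) := by
  rw [h.coeff_apply, sum_range_succ, h.diag, add_comm]

lemma injective (h : IsLowerTriangular L T b) : Function.Injective L := by
  intro u v huv
  ext n
  induction n using Nat.strong_induction_on with
  | _ n ih =>
    have hn := congrArg (coeff n) huv
    rw [h.coeff_apply_eq, h.coeff_apply_eq,
      sum_congr rfl fun k hk => by rw [ih k (mem_range.mp hk)]] at hn
    simpa using add_right_cancel hn

lemma apply_mk_triangularSolution (h : IsLowerTriangular L T b) (g : PowerSeries S) :
    L (PowerSeries.mk (triangularSolution T b g)) = g := by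
  ext n
  rw [h.coeff_apply_eq]
  simp only [coeff_mk]
  rw [triangularSolution_def, ← mul_assoc, Units.mul_inv, one_mul, sub_add_cancel]

lemma bijective (h : IsLowerTriangular L T b) : Function.Bijective L :=
  ⟨h.injective, fun g => ⟨_, h.apply_mk_triangularSolution g⟩⟩

lemma bijOn (h : IsLowerTriangular L T b) (A : Subring S) (hT : ∀ n k, ∀ v ∈ A, T n k v ∈ A)
    (hbinv : ∀ n, (↑(b n)⁻¹ : S) ∈ A) :
    Set.BijOn L {u | ∀ n, coeff n u ∈ A} {u | ∀ n, coeff n u ∈ A} := by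
  refine ⟨fun u hu n => ?_, h.injective.injOn, fun g hg => ?_⟩
  · rw [h.coeff_apply]
    exact sum_mem fun k _ => hT n k _ (hu k)
  · refine ⟨_, fun n => ?_, h.apply_mk_triangularSolution g⟩
    rw [coeff_mk]
    induction n using Nat.strong_induction_on with
    | _ n ih =>
      rw [triangularSolution_def]
      exact mul_mem (hbinv n)
        (sub_mem (hg n) (sum_mem fun k hk => hT n k _ (ih k (mem_range.mp hk))))

end IsLowerTriangular

end Triangular

lemma mem_Cz_of_bound {f : PowerSeries ℂ} {C A : ℝ} (hA : 0 ≤ A)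
    (hf : ∀ n, ‖coeff n f‖ ≤ C * A ^ n) : f ∈ Cz := by
  refine ⟨max C 1, max A 1, by positivity, by positivity, fun n => (hf n).trans ?_⟩
  calc C * A ^ n ≤ max C 1 * A ^ n := by gcongr; exact le_max_left C 1
    _ ≤ max C 1 * max A 1 ^ n := by gcongr; exact le_max_left A 1

lemma exists_common_bound_of_mem_Cz {f g : PowerSeries ℂ} (hf : f ∈ Cz) (hg : g ∈ Cz) :
    ∃ C A : ℝ, 0 < C ∧ 0 < A ∧ ∀ n, ‖coeff n f‖ ≤ C * A ^ n ∧ ‖coeff n g‖ ≤ C * A ^ n := by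
  obtain ⟨C₁, A₁, hC₁, hA₁, hf⟩ := hf
  obtain ⟨C₂, A₂, hC₂, hA₂, hg⟩ := hg
  refine ⟨max C₁ C₂, max A₁ A₂, by positivity, by positivity,
    fun n => ⟨(hf n).trans ?_, (hg n).trans ?_⟩⟩
  all_goals gcongr
  exacts [le_max_left _ _, le_max_left _ _, le_max_right _ _, le_max_right _ _]

lemma add_mem_Cz {f g : PowerSeries ℂ} (hf : f ∈ Cz) (hg : g ∈ Cz) : f + g ∈ Cz := by
  obtain ⟨C, A, -, hA, h⟩ := exists_common_bound_of_mem_Cz hf hg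
  refine mem_Cz_of_bound (C := 2 * C) hA.le fun n => ?_
  calc ‖coeff n (f + g)‖ ≤ ‖coeff n f‖ + ‖coeff n g‖ := by rw [map_add]; exact norm_add_le _ _
    _ ≤ 2 * C * A ^ n := by linarith [h n]

lemma mul_mem_Cz {f g : PowerSeries ℂ} (hf : f ∈ Cz) (hg : g ∈ Cz) : f * g ∈ Cz := by
  obtain ⟨C, A, hC, hA, h⟩ := exists_common_bound_of_mem_Cz hf hg
  refine mem_Cz_of_bound (C := C * C) (A := 2 * A) (by positivity) fun n => ?_
  have hterm : ∀ x ∈ antidiagonal n, ‖coeff x.1 f * coeff x.2 g‖ ≤ C * C * A ^ n := by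
    intro x hx
    rw [norm_mul, ← mem_antidiagonal.mp hx, pow_add]
    calc ‖coeff x.1 f‖ * ‖coeff x.2 g‖ ≤ (C * A ^ x.1) * (C * A ^ x.2) :=
          mul_le_mul (h x.1).1 (h x.2).2 (norm_nonneg _) (by positivity)
      _ = C * C * (A ^ x.1 * A ^ x.2) := by ring
  have htwo : ((n : ℝ) + 1) ≤ 2 ^ n := by exact_mod_cast Nat.lt_two_pow_self
  calc ‖coeff n (f * g)‖ ≤ ∑ x ∈ antidiagonal n, ‖coeff x.1 f * coeff x.2 g‖ := by
        rw [coeff_mul]; exact norm_sum_le _ _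
    _ ≤ ((n : ℝ) + 1) * (C * C * A ^ n) := by
        simpa [Nat.card_antidiagonal] using sum_le_card_nsmul _ _ _ hterm
    _ ≤ 2 ^ n * (C * C * A ^ n) := by gcongr
    _ = C * C * (2 * A) ^ n := by ring

noncomputable def convergentSubalgebra : Subalgebra ℂ (PowerSeries ℂ) where
  carrier := Cz
  mul_mem' := mul_mem_Cz
  add_mem' := add_mem_Cz
  algebraMap_mem' c := mem_Cz_of_bound (C := ‖c‖) le_rfl fun n => by
    rcases n with _ | n <;> simp [coeff_C]

lemma dz_mem_Cz {f : PowerSeries ℂ} (hf : f ∈ Cz) : dz f ∈ Cz := by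
  obtain ⟨C, A, hC, hA, h⟩ := hf
  refine mem_Cz_of_bound (C := C * A) (A := 2 * A) (by positivity) fun n => ?_
  have htwo : ((n : ℝ) + 1) ≤ 2 ^ n := by exact_mod_cast Nat.lt_two_pow_self
  have hcoeff : coeff n (dz f) = ((n : ℂ) + 1) * coeff (n + 1) f := by simp [dz]
  calc ‖coeff n (dz f)‖ = ((n : ℝ) + 1) * ‖coeff (n + 1) f‖ := by
        rw [hcoeff, norm_mul]; norm_cast
    _ ≤ 2 ^ n * (C * A ^ (n + 1)) := by gcongr; exact h (n + 1)
    _ = C * A * (2 * A) ^ n := by ring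

lemma dz_pow_mem_Cz (r : ℕ) {f : PowerSeries ℂ} (hf : f ∈ Cz) : (dz ^ r) f ∈ Cz := by
  induction r with
  | zero => simpa using hf
  | succ r ih => rw [pow_succ', Module.End.mul_apply]; exact dz_mem_Cz ih

lemma sub_mul_sum_antidiagonal_pow_mul_pow_le {A R : ℝ} (hA : 0 ≤ A) (n : ℕ) :
    (R - A) * ∑ x ∈ antidiagonal n, A ^ x.1 * R ^ x.2 ≤ R ^ (n + 1) := by
  have hgeom := geom_sum₂_mul A R (n + 1)
  rw [Nat.sum_antidiagonal_eq_sum_range_succ_mk]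
  simp only [Nat.add_sub_cancel] at hgeom
  nlinarith [pow_nonneg hA (n + 1)]

lemma norm_coeff_inv_le {f : PowerSeries ℂ} {C A : ℝ} (hC : 0 < C) (hA : 0 < A)
    (hf : ∀ n, ‖coeff n f‖ ≤ C * A ^ n) (h0 : constantCoeff f ≠ 0) (n : ℕ) :
    ‖coeff n f⁻¹‖ ≤ ‖constantCoeff f‖⁻¹ * (A * (1 + C / ‖constantCoeff f‖)) ^ n := by
  set c := ‖constantCoeff f‖
  -- `R - A = C A / c` is exactly what lets the geometric bound survive the recursion
  -- `c₀ g_{n+1} = -Σ f_{i+1} g_{n-i}` for the coefficients `g` of `f⁻¹`.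
  set R := A * (1 + C / c)
  have hc : 0 < c := norm_pos_iff.mpr h0
  induction n using Nat.strong_induction_on with
  | _ n ih =>
  rcases n with _ | n
  · simp [coeff_inv, c]
  rw [coeff_inv, if_neg n.succ_ne_zero, Nat.sum_antidiagonal_succ, if_neg (lt_irrefl _), zero_add,
    norm_mul, norm_neg, norm_inv]
  gcongr
  calc ‖∑ x ∈ antidiagonal n, if x.2 < n + 1 then coeff (x.1 + 1) f * coeff x.2 f⁻¹ else 0‖
      ≤ ∑ x ∈ antidiagonal n, C * A ^ (x.1 + 1) * (c⁻¹ * R ^ x.2) := by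
        refine norm_sum_le_of_le _ fun x hx => ?_
        have hx2 : x.2 < n + 1 := by have := mem_antidiagonal.mp hx; omega
        rw [if_pos hx2, norm_mul]
        exact mul_le_mul (hf _) (ih x.2 hx2) (norm_nonneg _) (by positivity)
    _ = (R - A) * ∑ x ∈ antidiagonal n, A ^ x.1 * R ^ x.2 := by
        rw [mul_sum]
        refine sum_congr rfl fun x _ => ?_
        simp only [R]
        field_simp
        ring
    _ ≤ R ^ (n + 1) := sub_mul_sum_antidiagonal_pow_mul_pow_le hA.le n

lemma inv_mem_Cz {f : PowerSeries ℂ} (hf : f ∈ Cz) (h0 : constantCoeff f ≠ 0) : f⁻¹ ∈ Cz := by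
  obtain ⟨C, A, hC, hA, h⟩ := hf
  exact mem_Cz_of_bound (by positivity) (norm_coeff_inv_le hC hA h h0)

section Operator

lemma coeff_of_lt_ordT {g : PS2} {i : ℕ} (h : i < ordT g) : coeff i g = 0 := by
  by_contra hne
  exact Nat.notMem_of_lt_sInf h hne

lemma natCast_descFactorial_eq_div {n k : ℕ} (h : k ≤ n) :
    (n.descFactorial k : ℂ) = n ! / (n - k)! := by
  rw [Nat.descFactorial_eq_div h,
    Nat.cast_div (Nat.factorial_dvd_factorial (Nat.sub_le n k))
      (Nat.cast_ne_zero.mpr (Nat.factorial_ne_zero _))]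

lemma coeff_dzc_pow (r : ℕ) (u : PS2) (n : ℕ) : coeff n ((dzc ^ r) u) = (dz ^ r) (coeff n u) := by
  induction r with
  | zero => simp
  | succ r ih =>
    rw [pow_succ', pow_succ', Module.End.mul_apply, Module.End.mul_apply, ← ih]
    simp [dzc]

lemma coeff_dt_pow (j : ℕ) (u : PS2) (l : ℕ) :
    coeff l ((dt ^ j) u) = ((l + j).descFactorial j : ℂ) • coeff (l + j) u := by
  induction j generalizing u with
  | zero => simp
  | succ j ih =>
    rw [pow_succ, Module.End.mul_apply, ih]
    simp only [dt, LinearMap.coe_mk, AddHom.coe_mk, coeff_mk, smul_smul, ← add_assoc,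
      Nat.succ_descFactorial_succ]
    push_cast
    ring_nf

lemma coeff_dtInv (m : ℕ) (u : PS2) (n : ℕ) :
    coeff n (dtInv m u) = if m ≤ n then (((n - m)! : ℂ) / n !) • coeff (n - m) u else 0 := by
  simp [dtInv]

lemma coeff_dt_pow_dzc_pow_dtInv (j r m : ℕ) (u : PS2) (l : ℕ) :
    coeff l ((dt ^ j) ((dzc ^ r) (dtInv m u))) =
      if m ≤ l + j then (((l + j - m)! : ℂ) / l !) • (dz ^ r) (coeff (l + j - m) u) else 0 := by
  rw [coeff_dt_pow, coeff_dzc_pow, coeff_dtInv]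
  split_ifs
  · rw [map_smul, smul_smul, natCast_descFactorial_eq_div (Nat.le_add_left j l),
      Nat.add_sub_cancel]
    congr 1
    have : ((l + j)! : ℂ) ≠ 0 := Nat.cast_ne_zero.mpr (Nat.factorial_ne_zero _)
    field_simp
  · simp

lemma coeff_POp (Λ : Finset (ℕ × ℕ)) (a : ℕ × ℕ → PS2) (m : ℕ) (u : PS2) (n : ℕ) :
    coeff n (POp Λ a m u) = ∑ p ∈ Λ, ∑ x ∈ antidiagonal n, coeff x.1 (a p) *
      if m ≤ x.2 + p.1 then
        (((x.2 + p.1 - m)! : ℂ) / x.2 !) • (dz ^ p.2) (coeff (x.2 + p.1 - m) u)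
      else 0 := by
  simp [POp, coeff_mul, coeff_dt_pow_dzc_pow_dtInv]

variable (Λ : Finset (ℕ × ℕ)) (a : ℕ × ℕ → PS2)

/-- The `(n, k)` entry of the matrix of `POp Λ a m` acting on `t`-coefficients: `x = (i, l)` splits
`n = i + l`, with `i` the index of the coefficient of `a p` and `l` that of
`∂_t^j ∂_z^r ∂_t^{-m} u`. -/
noncomputable def POpEntry (m n k : ℕ) (v : PowerSeries ℂ) : PowerSeries ℂ :=
  ∑ p ∈ Λ, ∑ x ∈ antidiagonal n,
    if x.2 + p.1 = k + m then coeff x.1 (a p) * ((k ! : ℂ) / x.2 !) • (dz ^ p.2) v else 0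

variable {Λ a}

lemma coeff_POp_eq_sum_POpEntry {m : ℕ} (hord : ∀ p ∈ Λ, (p.1 : ℤ) - ordT (a p) ≤ m)
    (u : PS2) (n : ℕ) :
    coeff n (POp Λ a m u) = ∑ k ∈ range (n + 1), POpEntry Λ a m n k (coeff k u) := by
  simp only [coeff_POp, POpEntry]
  rw [sum_comm (s := range (n + 1))]
  refine sum_congr rfl fun p hp => ?_
  rw [sum_comm (s := range (n + 1))]
  refine sum_congr rfl fun x hx => ?_
  have hx := mem_antidiagonal.mp hx
  split_ifs with hm
  · rw [sum_eq_single (x.2 + p.1 - m)]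
    · rw [if_pos (by omega)]
    · exact fun k _ hk => if_neg (by omega)
    · intro hk
      -- a contribution with `k > n` would need `i < j - m ≤ ord_t (a p)`
      have hord' : x.1 < ordT (a p) := by
        have := hord p hp
        rw [mem_range] at hk
        omega
      rw [if_pos (by omega), coeff_of_lt_ordT hord', zero_mul]
  · rw [mul_zero]
    exact (sum_eq_zero fun k _ => if_neg (by omega)).symm

lemma POpEntry_self {m : ℕ} (hord : ∀ p ∈ Λ, (p.1 : ℤ) - ordT (a p) ≤ m) (n : ℕ)
    (v : PowerSeries ℂ) :
    POpEntry Λ a m n n v = ∑ p ∈ Λ with (p.1 : ℤ) - ordT (a p) = m,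
      coeff (p.1 - m) (a p) * (n.descFactorial (p.1 - m) : ℂ) • (dz ^ p.2) v := by
  rw [POpEntry, sum_filter]
  refine sum_congr rfl fun p hp => ?_
  have hp := hord p hp
  rw [sum_eq_single (p.1 - m, n - (p.1 - m))]
  · by_cases hle : m ≤ p.1 ∧ p.1 - m ≤ n
    · rw [if_pos (by omega), natCast_descFactorial_eq_div hle.2]
      split_ifs
      · rfl
      · rw [coeff_of_lt_ordT (by omega), zero_mul]
    · rw [if_neg (by omega)]
      split_ifs
      · rw [Nat.descFactorial_eq_zero_iff_lt.mpr (by omega)]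
        simp
      · rfl
  · intro x hx hne
    have hx := mem_antidiagonal.mp hx
    refine if_neg fun h => hne ?_
    ext <;> dsimp only <;> omega
  · intro hx
    rw [HasAntidiagonal.mem_antidiagonal] at hx
    exact if_neg (by omega)

lemma POpEntry_self_eq_bcoef_mul {m : ℕ} (hord : ∀ p ∈ Λ, (p.1 : ℤ) - ordT (a p) ≤ m)
    (hfuchs : ∀ p ∈ Λ, (p.1 : ℤ) - ordT (a p) = m → p.2 = 0) (n : ℕ) (v : PowerSeries ℂ) :
    POpEntry Λ a m n n v = bcoef Λ a m n 0 * v := by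
  rw [POpEntry_self hord, bcoef, Int.toNat_natCast, sum_mul]
  refine sum_congr (filter_congr fun p hp => ⟨fun h => ⟨hfuchs p hp h, h⟩, And.right⟩)
    fun p hp => ?_
  rw [(mem_filter.mp hp).2.1, pow_zero, Module.End.one_apply,
    smul_mul_assoc, mul_smul_comm]

lemma constantCoeff_bcoef {M : ℤ} (hfuchs : ∀ p ∈ Λ, (p.1 : ℤ) - ordT (a p) = M → p.2 = 0)
    (n : ℕ) : constantCoeff (bcoef Λ a M n 0) = WFuchs Λ a M n := by
  rw [bcoef, WFuchs, map_sum]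
  refine sum_congr (filter_congr fun p hp => ⟨And.right, fun h => ⟨hfuchs p hp h, h⟩⟩)
    fun p _ => ?_
  rw [← coeff_zero_eq_constantCoeff_apply, map_smul, smul_eq_mul, mul_comm]

lemma POpEntry_mem_Cz (hconv : ∀ p ∈ Λ, ∀ n, coeff n (a p) ∈ Cz) (m n k : ℕ)
    {v : PowerSeries ℂ} (hv : v ∈ Cz) : POpEntry Λ a m n k v ∈ Cz := by
  refine sum_mem (S := convergentSubalgebra) fun p hp => sum_mem fun x _ => ?_
  split_ifs
  · exact mul_mem (hconv p hp x.1) (Subalgebra.smul_mem _ (dz_pow_mem_Cz p.2 hv) _)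
  · exact zero_mem _

lemma bcoef_mem_Cz (hconv : ∀ p ∈ Λ, ∀ n, coeff n (a p) ∈ Cz) (M : ℤ) (n r : ℕ) :
    bcoef Λ a M n r ∈ Cz :=
  sum_mem (S := convergentSubalgebra) fun p hp =>
    Subalgebra.smul_mem _ (hconv p (mem_filter.mp hp).1 _) _

end Operator

theorem statement16_general (Λ : Finset (ℕ × ℕ)) (hΛ : Λ.Nonempty) (a : ℕ × ℕ → PS2)
    (hconv : ∀ p ∈ Λ, ∀ n : ℕ, PowerSeries.coeff (R := PowerSeries ℂ) n (a p) ∈ Cz)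
    (M : ℤ) (hM : M = Λ.sup' hΛ (fun p => (p.1 : ℤ) - (ordT (a p) : ℤ))) (hM0 : 0 ≤ M)
    (hfuchs : ∀ p ∈ Λ, (p.1 : ℤ) - (ordT (a p) : ℤ) = M → p.2 = 0)
    (hres : ∀ n : ℕ, WFuchs Λ a M n ≠ 0) :
    Function.Bijective (POp Λ a M.toNat) ∧
      Set.BijOn (POp Λ a M.toNat) Ot Ot := by
  obtain ⟨m, rfl⟩ := Int.eq_ofNat_of_zero_le hM0
  rw [Int.toNat_natCast]
  have hord : ∀ p ∈ Λ, (p.1 : ℤ) - ordT (a p) ≤ m := fun p hp =>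
    hM ▸ le_sup' (fun p : ℕ × ℕ => (p.1 : ℤ) - ordT (a p)) hp
  have hb0 (n : ℕ) : constantCoeff (bcoef Λ a m n 0) ≠ 0 := constantCoeff_bcoef hfuchs n ▸ hres n
  have hinv (n : ℕ) : bcoef Λ a m n 0 * (bcoef Λ a m n 0)⁻¹ = 1 :=
    PowerSeries.mul_inv_cancel _ (hb0 n)
  let b (n : ℕ) : (PowerSeries ℂ)ˣ := Units.mkOfMulEqOne _ _ (hinv n)
  have hT : IsLowerTriangular (POp Λ a m) (POpEntry Λ a m) b :=
    ⟨coeff_POp_eq_sum_POpEntry hord, POpEntry_self_eq_bcoef_mul hord hfuchs⟩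
  exact ⟨hT.bijective, hT.bijOn convergentSubalgebra.toSubring
    (fun n k _ hv => POpEntry_mem_Cz hconv m n k hv)
    fun n => inv_mem_Cz (bcoef_mem_Cz hconv _ n 0) (hb0 n)⟩

/-- Corollary (Fuchsian case): if each `a_{j,r,n} ∈ ℂ{z}`, `Λ_m ⊆ ℕ₀×{0}`, and the
non-resonance condition `W(n,0) ≠ 0` holds for every `n ∈ ℕ₀`, then the Fuchsian operator
`P(∂_t,∂_z)∂_t^{−m}` is a bijective `ℂ`-linear map of `ℂ[[t,z]]` onto itself restricting
to a bijection of `𝒪[[t]]` onto itself. -/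
theorem statement16 (Λ : Finset (ℕ × ℕ)) (hΛ : Λ.Nonempty) (a : ℕ × ℕ → PS2)
    (ha : ∀ p ∈ Λ, a p ≠ 0)
    (hconv : ∀ p ∈ Λ, ∀ n : ℕ, PowerSeries.coeff (R := PowerSeries ℂ) n (a p) ∈ Cz)
    (M : ℤ) (hM : M = Λ.sup' hΛ (fun p => (p.1 : ℤ) - (ordT (a p) : ℤ))) (hM0 : 0 ≤ M)
    (hfuchs : ∀ p ∈ Λ, (p.1 : ℤ) - (ordT (a p) : ℤ) = M → p.2 = 0)
    (hres : ∀ n : ℕ, WFuchs Λ a M n ≠ 0) :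
    Function.Bijective (POp Λ a M.toNat) ∧
      Set.BijOn (POp Λ a M.toNat) Ot Ot :=
  statement16_general Λ hΛ a hconv M hM hM0 hfuchs hres
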